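/- arXiv:1103.2534 — 2 statements merged into one kernel-verified Lean document; each statement's English description precedes it below -/
import Mathlib

section
/- Let X be a Lévy process in R^d with characteristic exponent Ψ (E e^{iz·X(t)} = e^{−tΨ(z)}). For every Borel probability measure ν on [0,∞) and every z ∈ R^d, the energy form E_ν(z) := ∫∫ exp(−|t−s| Ψ(sgn(t−s) z)) ν(ds) ν(dt) satisfies E_ν(z) = E[ | ∫ e^{i z·X(t)} ν(dt) |² ]; in particular E_ν(z) is real-valued and 0 ≤ E_ν(z) ≤ 1. -/
open MeasureTheory ProbabilityTheory Filter Set Metric Bornology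
open scoped ENNReal NNReal Topology symmDiff Real

noncomputable section

/-- A Lévy process with values in a normed group `E`: it starts from `0`, has stationary
and independent increments, and almost surely càdlàg paths on `[0,∞)`. -/
structure IsLevyProcess {Ω E : Type*} [MeasurableSpace Ω]
    [NormedAddCommGroup E] [MeasurableSpace E] [BorelSpace E]
    (P : Measure Ω) (X : ℝ → Ω → E) : Prop where
  isProb : IsProbabilityMeasure P
  meas : ∀ t, Measurable (X t)
  zero : ∀ᵐ ω ∂P, X 0 ω = 0
  stationary : ∀ s t : ℝ, 0 ≤ s → s ≤ t →
    Measure.map (fun ω => X t ω - X s ω) P = Measure.map (X (t - s)) P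
  indep : ∀ (n : ℕ) (u : ℕ → ℝ), (∀ i, 0 ≤ u i) → Monotone u →
    iIndepFun (m := fun _ : Fin n => (inferInstance : MeasurableSpace E))
      (fun (i : Fin n) (ω : Ω) => X (u (i.1 + 1)) ω - X (u i.1) ω) P
  cadlag : ∀ᵐ ω ∂P, ∀ t : ℝ, 0 ≤ t →
    ContinuousWithinAt (fun s => X s ω) (Ici t) t ∧
      (0 < t → ∃ l : E, Tendsto (fun s => X s ω) (nhdsWithin t (Iio t)) (nhds l))

/-- A subordinator: a real-valued Lévy process with nondecreasing sample paths. -/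
structure IsSubordinator {Ω : Type*} [MeasurableSpace Ω]
    (P : Measure Ω) (S : ℝ → Ω → ℝ) : Prop where
  levy : IsLevyProcess P S
  mono : ∀ᵐ ω ∂P, MonotoneOn (fun t => S t ω) (Ici 0)

/-- `kappa P X ε t = P{X(t) ∈ B(0,ε)}`, where `B(0,ε)` is the open ℓ^∞ ball
(the sup-norm ball of `Fin d → ℝ`). -/
def kappa {Ω : Type*} [MeasurableSpace Ω] {d : ℕ}
    (P : Measure Ω) (X : ℝ → Ω → (Fin d → ℝ)) (ε t : ℝ) : ℝ :=
  (P {ω | X t ω ∈ Metric.ball (0 : Fin d → ℝ) ε}).toReal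

/-- Borel probability measures on `ℝ` giving full mass to `F`. -/
def ProbOn (F : Set ℝ) : Set (Measure ℝ) := {ν | IsProbabilityMeasure ν ∧ ν F = 1}

/-- Compactly supported Borel probability measures on `ℝ` giving full mass to `F`. -/
def ProbOnC (F : Set ℝ) : Set (Measure ℝ) :=
  {ν | IsProbabilityMeasure ν ∧ ν F = 1 ∧ ∃ K : Set ℝ, IsCompact K ∧ ν K = 1}

/-- The box-dimension profile `Dim̄_κ F` of `F` with respect to a family `κ = {κ_ε}`:
`sup {η > 0 : liminf_{ε↓0} inf_{ν ∈ P(F)} ∫∫ κ_ε(|t-s|) ε^{-η} ν(ds) ν(dt) = 0}`,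
with `sup ∅ = 0` (the convention of `Real.sSup`). -/
def boxDimProfile (κ : ℝ → ℝ → ℝ) (F : Set ℝ) : ℝ :=
  sSup {η : ℝ | 0 < η ∧
    Filter.liminf
      (fun ε : ℝ => ⨅ ν : ProbOn F, ∫ t, ∫ s, κ ε |t - s| / ε ^ η ∂ν.1 ∂ν.1)
      (nhdsWithin 0 (Set.Ioi 0)) = 0}

/-- The packing dimension profile `Dim_κ F`: the infimum over all countable coverings of `F`
by bounded Borel sets `F n` of `sup_n Dim̄_κ (F n)`. -/
def packDimProfile (κ : ℝ → ℝ → ℝ) (F : Set ℝ) : ℝ :=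
  ⨅ c : {c : ℕ → Set ℝ //
      (∀ n, Bornology.IsBounded (c n) ∧ MeasurableSet (c n)) ∧ F ⊆ ⋃ n, c n},
    ⨆ n, boxDimProfile κ (c.1 n)

/-- Howroyd's `s`-dimensional box-dimension profile `B-Dim̄_s G`, defined through the kernel
`min{1, (ε/|t-u|)^s}` (equal to `1` on the diagonal `t = u`). -/
def bBoxProfile (s : ℝ) (G : Set ℝ) : ℝ :=
  sSup {η : ℝ | 0 < η ∧
    Filter.liminf
      (fun ε : ℝ =>
        (⨅ ν : ProbOn G,
          ∫ t, ∫ u, (if t = u then 1 else min 1 ((ε / |t - u|) ^ s)) ∂ν.1 ∂ν.1) / ε ^ η)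
      (nhdsWithin 0 (Set.Ioi 0)) = 0}

/-- The Falconer–Howroyd `s`-dimensional packing dimension profile `Dim^{FH}_s F`,
realized as the regularization of Howroyd's box-dimension profile `B-Dim̄_s`. -/
def fhDimProfile (s : ℝ) (F : Set ℝ) : ℝ :=
  ⨅ c : {c : ℕ → Set ℝ //
      (∀ n, Bornology.IsBounded (c n) ∧ MeasurableSet (c n)) ∧ F ⊆ ⋃ n, c n},
    ⨆ n, bBoxProfile s (c.1 n)

/-- The Kolmogorov capacity `K_G(r)`: the maximal number of points of `G`
with pairwise distances at least `r`. -/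
def kolmCap {E : Type*} [PseudoMetricSpace E] (G : Set E) (r : ℝ) : ℝ≥0∞ :=
  ⨆ (s : Finset E) (_ : ↑s ⊆ G ∧ (s : Set E).Pairwise fun x y => r ≤ dist x y),
    (s.card : ℝ≥0∞)

/-- The upper Minkowski dimension `dim̄_M G = limsup_{r↓0} log K_G(r) / log(1/r)`. -/
def upperMinkowskiDim {E : Type*} [PseudoMetricSpace E] (G : Set E) : ℝ :=
  Filter.limsup
    (fun r : ℝ => Real.log (kolmCap G r).toReal / Real.log (1 / r))
    (nhdsWithin 0 (Set.Ioi 0))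

/-- The packing dimension, via Tricot's regularization of the upper Minkowski dimension. -/
def packingDim {E : Type*} [PseudoMetricSpace E] (G : Set E) : ℝ :=
  ⨅ c : {c : ℕ → Set E // (∀ n, Bornology.IsBounded (c n)) ∧ G ⊆ ⋃ n, c n},
    ⨆ n, upperMinkowskiDim (c.1 n)

/-- The energy form `E_ν(z) = ∫∫ exp(-|t-s| Ψ(sgn(t-s) z)) ν(ds) ν(dt)`. -/
def energyForm {d : ℕ} (Ψ : (Fin d → ℝ) → ℂ) (ν : Measure ℝ) (z : Fin d → ℝ) : ℂ :=
  ∫ t, ∫ s, Complex.exp (-(|t - s| : ℝ) * Ψ (Real.sign (t - s) • z)) ∂ν ∂ν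

/-- The scaled Pólya kernel `P_ε(x) = ∏_j (1 - cos(2εx_j)) / (2πε x_j²)`. -/
def polyaKernel {d : ℕ} (ε : ℝ) (x : Fin d → ℝ) : ℝ :=
  ∏ j, (1 - Real.cos (2 * ε * x j)) / (2 * π * ε * (x j) ^ 2)

/-- The standard Cauchy density on `ℝ^d`, `f_C(z) = π^{-d} ∏_j (1 + z_j²)⁻¹`. -/
def cauchyDensity {d : ℕ} (z : Fin d → ℝ) : ℝ :=
  (π : ℝ)⁻¹ ^ d * ∏ j, (1 + (z j) ^ 2)⁻¹



section EnergyAux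

open Complex

variable {Ω : Type*} [MeasurableSpace Ω] {d : ℕ}

/-- Joint a.e.-strong-measurability of `(t, ω) ↦ g (X t ω)` on `ν ⊗ P`, using the a.s.
right-continuity of paths and a dyadic approximation. -/
lemma levy_aesm (P : Measure Ω) (X : ℝ → Ω → (Fin d → ℝ)) (hX : IsLevyProcess P X)
    (g : (Fin d → ℝ) → ℂ) (hg : Continuous g)
    (ν : Measure ℝ) (hν : IsProbabilityMeasure ν) (hν0 : ν (Set.Ici 0) = 1) :
    AEStronglyMeasurable (fun p : ℝ × Ω => g (X p.1 p.2)) (ν.prod P) := by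
  haveI := hX.isProb
  haveI := hν
  set prop : Ω → Prop := fun ω => ∀ t : ℝ, 0 ≤ t →
    ContinuousWithinAt (fun s => X s ω) (Ici t) t ∧
      (0 < t → ∃ l : Fin d → ℝ, Tendsto (fun s => X s ω) (nhdsWithin t (Iio t)) (nhds l))
    with hprop
  set N : Set Ω := toMeasurable P {ω | ¬ prop ω} with hN
  have hNmeas : MeasurableSet N := measurableSet_toMeasurable _ _
  have hN0 : P N = 0 := by
    rw [hN, measure_toMeasurable]
    exact ae_iff.mp hX.cadlag
  have hA : ∀ ω, ω ∉ N → prop ω := by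
    intro ω hω
    by_contra h
    exact hω (subset_toMeasurable _ _ h)
  set q : ℕ → ℝ → ℝ := fun n t => ((⌈t * 2 ^ n⌉ : ℤ) : ℝ) / 2 ^ n with hq
  have hq_meas : ∀ n, Measurable fun p : ℝ × Ω => g (X (q n p.1) p.2) := by
    intro n
    have h1 : Measurable fun p : Ω × ℤ => g (X (((p.2 : ℤ) : ℝ) / 2 ^ n) p.1) :=
      measurable_from_prod_countable_left fun k =>
        hg.measurable.comp (hX.meas (((k : ℤ) : ℝ) / 2 ^ n))
    have h2 : Measurable fun p : ℝ × Ω => (p.2, (⌈p.1 * 2 ^ n⌉ : ℤ)) :=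
      measurable_snd.prodMk ((measurable_fst.mul_const _).ceil)
    exact h1.comp h2
  set S : Set (ℝ × Ω) := (Ici 0) ×ˢ Nᶜ with hSdef
  have hS : MeasurableSet S := measurableSet_Ici.prod hNmeas.compl
  have hconv : ∀ p ∈ S, Tendsto (fun n => g (X (q n p.1) p.2)) atTop (𝓝 (g (X p.1 p.2))) := by
    rintro ⟨t, ω⟩ ⟨ht, hω⟩
    have hpath : ContinuousWithinAt (fun s => X s ω) (Ici t) t := (hA ω hω t ht).1
    have hq_ge : ∀ n, t ≤ q n t := by
      intro n
      rw [hq]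
      dsimp only
      rw [le_div_iff₀ (by positivity : (0:ℝ) < 2 ^ n)]
      exact Int.le_ceil _
    have hq_le : ∀ n, q n t ≤ t + ((2:ℝ) ^ n)⁻¹ := by
      intro n
      rw [hq]
      dsimp only
      rw [div_le_iff₀ (by positivity : (0:ℝ) < 2 ^ n)]
      have h1 : ((⌈t * 2 ^ n⌉ : ℤ) : ℝ) ≤ t * 2 ^ n + 1 := (Int.ceil_lt_add_one _).le
      have h2 : t * 2 ^ n + 1 = (t + ((2:ℝ) ^ n)⁻¹) * 2 ^ n := by
        field_simp
      linarith
    have h2 : Tendsto (fun n : ℕ => t + ((2:ℝ) ^ n)⁻¹) atTop (𝓝 t) := by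
      have h3 : Tendsto (fun n : ℕ => ((2:ℝ) ^ n)⁻¹) atTop (𝓝 0) :=
        tendsto_inv_atTop_zero.comp (tendsto_pow_atTop_atTop_of_one_lt one_lt_two)
      simpa using tendsto_const_nhds.add h3
    have hqt : Tendsto (fun n => q n t) atTop (𝓝 t) :=
      tendsto_of_tendsto_of_tendsto_of_le_of_le tendsto_const_nhds h2 hq_ge hq_le
    have hqt' : Tendsto (fun n => q n t) atTop (𝓝[Ici t] t) :=
      tendsto_nhdsWithin_iff.mpr ⟨hqt, Eventually.of_forall fun n => hq_ge n⟩
    exact (hg.tendsto _).comp (hpath.tendsto.comp hqt')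
  have hlim : ∀ p : ℝ × Ω,
      Tendsto (fun n => S.indicator (fun p => g (X (q n p.1) p.2)) p) atTop
        (𝓝 (S.indicator (fun p => g (X p.1 p.2)) p)) := by
    intro p
    by_cases hp : p ∈ S
    · simp only [Set.indicator_of_mem hp]
      exact hconv p hp
    · simp only [Set.indicator_of_notMem hp]
      exact tendsto_const_nhds
  have hGmeas : Measurable (S.indicator fun p => g (X p.1 p.2)) :=
    measurable_of_tendsto_metrizable (fun n => (hq_meas n).indicator hS)
      (tendsto_pi_nhds.mpr hlim)
  have hν0' : ν (Ici (0:ℝ))ᶜ = 0 := by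
    have h := measure_compl (s := Set.Ici (0:ℝ)) measurableSet_Ici (measure_ne_top ν _)
    rw [hν0, measure_univ] at h
    simpa using h
  have hSc : (ν.prod P) Sᶜ = 0 := by
    rw [hSdef, Set.compl_prod_eq_union]
    apply measure_union_null
    · rw [Measure.prod_prod, hν0']
      simp
    · rw [Measure.prod_prod, compl_compl, hN0]
      simp
  refine ⟨S.indicator fun p => g (X p.1 p.2), hGmeas.stronglyMeasurable, ?_⟩
  have hmem : ∀ᵐ p ∂(ν.prod P), p ∈ S := by
    rw [ae_iff]
    exact hSc
  filter_upwards [hmem] with p hp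
  exact (Set.indicator_of_mem hp fun p => g (X p.1 p.2)).symm

/-- Characteristic function of an increment of a Lévy process. -/
lemma levy_char_increment (P : Measure Ω) (X : ℝ → Ω → (Fin d → ℝ)) (hX : IsLevyProcess P X)
    (Ψ : (Fin d → ℝ) → ℂ)
    (hΨ : ∀ t : ℝ, 0 ≤ t → ∀ z : Fin d → ℝ,
      ∫ ω, Complex.exp (Complex.I * ∑ j, (z j : ℂ) * (X t ω j : ℂ)) ∂P
        = Complex.exp (-(t : ℂ) * Ψ z))
    {s t : ℝ} (hs : 0 ≤ s) (hst : s ≤ t) (w : Fin d → ℝ) :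
    ∫ ω, Complex.exp (Complex.I * ∑ j, (w j : ℂ) * ((X t ω j : ℂ) - (X s ω j : ℂ))) ∂P
      = Complex.exp (-((t - s : ℝ) : ℂ) * Ψ w) := by
  set g : (Fin d → ℝ) → ℂ := fun y => Complex.exp (Complex.I * ∑ j, (w j : ℂ) * (y j : ℂ))
    with hgdef
  have hg : Continuous g := by
    apply Complex.continuous_exp.comp
    exact continuous_const.mul (continuous_finset_sum _ fun j _ =>
      continuous_const.mul (Complex.continuous_ofReal.comp (continuous_apply j)))
  have h1 : (fun ω => Complex.exp (Complex.I *
      ∑ j, (w j : ℂ) * ((X t ω j : ℂ) - (X s ω j : ℂ))))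
      = fun ω => g (X t ω - X s ω) := by
    funext ω
    simp [hgdef, Pi.sub_apply]
  rw [h1]
  have hmeas : Measurable fun ω => X t ω - X s ω := (hX.meas t).sub (hX.meas s)
  rw [← integral_map hmeas.aemeasurable hg.aestronglyMeasurable, hX.stationary s t hs hst,
    integral_map (hX.meas _).aemeasurable hg.aestronglyMeasurable]
  exact hΨ (t - s) (by linarith) w

end EnergyAux

set_option maxHeartbeats 1000000 in
/-- For a Lévy process `X` in `ℝ^d` with characteristic exponent `Ψ` and a Borel probability
measure `ν` on `[0,∞)`, the energy form satisfies
`E_ν(z) = E[|∫ e^{iz·X(t)} ν(dt)|²]`; in particular it is real-valued and lies in `[0,1]`. -/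
theorem energyForm_eq_expectation {Ω : Type*} [MeasurableSpace Ω] {d : ℕ}
    (P : Measure Ω) (X : ℝ → Ω → (Fin d → ℝ)) (hX : IsLevyProcess P X)
    (Ψ : (Fin d → ℝ) → ℂ)
    (hΨ : ∀ t : ℝ, 0 ≤ t → ∀ z : Fin d → ℝ,
      ∫ ω, Complex.exp (Complex.I * ∑ j, (z j : ℂ) * (X t ω j : ℂ)) ∂P
        = Complex.exp (-(t : ℂ) * Ψ z))
    (ν : Measure ℝ) (hν : IsProbabilityMeasure ν) (hν0 : ν (Set.Ici 0) = 1)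
    (z : Fin d → ℝ) :
    energyForm Ψ ν z
        = ((∫ ω, ‖∫ t, Complex.exp (Complex.I * ∑ j, (z j : ℂ) * (X t ω j : ℂ)) ∂ν‖ ^ 2 ∂P : ℝ) : ℂ)
      ∧ (energyForm Ψ ν z).im = 0
      ∧ 0 ≤ (energyForm Ψ ν z).re ∧ (energyForm Ψ ν z).re ≤ 1 := by
  haveI := hX.isProb
  haveI := hν
  set f : ℝ → Ω → ℂ := fun t ω => Complex.exp (Complex.I * ∑ j, (z j : ℂ) * (X t ω j : ℂ))
    with hf
  have hnorm : ∀ t ω, ‖f t ω‖ = 1 := by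
    intro t ω
    have h1 : (∑ j, (z j : ℂ) * (X t ω j : ℂ)) = ((∑ j, z j * X t ω j : ℝ) : ℂ) := by
      push_cast
      ring
    rw [hf]
    dsimp only
    rw [h1, Complex.norm_exp]
    simp [Complex.mul_re]
  have hmul : ∀ t s ω, f t ω * (starRingEnd ℂ) (f s ω)
      = Complex.exp (Complex.I * ∑ j, (z j : ℂ) * ((X t ω j : ℂ) - (X s ω j : ℂ))) := by
    intro t s ω
    rw [hf]
    dsimp only
    rw [← Complex.exp_conj, ← Complex.exp_add]
    congr 1
    rw [map_mul, Complex.conj_I]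
    simp only [map_sum, map_mul, Complex.conj_ofReal]
    simp only [mul_sub, Finset.sum_sub_distrib]
    ring
  have hchar : ∀ t ∈ Set.Ici (0:ℝ), ∀ s ∈ Set.Ici (0:ℝ),
      ∫ ω, f t ω * (starRingEnd ℂ) (f s ω) ∂P
        = Complex.exp (-(|t - s| : ℝ) * Ψ (Real.sign (t - s) • z)) := by
    intro t ht s hs
    rcases lt_trichotomy t s with h | h | h
    · have h1 : ∀ ω, f t ω * (starRingEnd ℂ) (f s ω)
          = Complex.exp (Complex.I *
            ∑ j, ((-z) j : ℂ) * ((X s ω j : ℂ) - (X t ω j : ℂ))) := by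
        intro ω
        rw [hmul t s ω]
        congr 2
        apply Finset.sum_congr rfl
        intro j _
        simp only [Pi.neg_apply, Complex.ofReal_neg]
        ring
      calc ∫ ω, f t ω * (starRingEnd ℂ) (f s ω) ∂P
          = ∫ ω, Complex.exp (Complex.I *
              ∑ j, ((-z) j : ℂ) * ((X s ω j : ℂ) - (X t ω j : ℂ))) ∂P := by
            simp only [h1]
        _ = Complex.exp (-((s - t : ℝ) : ℂ) * Ψ (-z)) :=
            levy_char_increment P X hX Ψ hΨ ht h.le (-z)
        _ = Complex.exp (-(|t - s| : ℝ) * Ψ (Real.sign (t - s) • z)) := by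
            rw [Real.sign_of_neg (by linarith : t - s < 0), abs_of_neg (by linarith : t - s < 0),
              neg_sub, neg_one_smul]
    · subst h
      have h1 : ∀ ω, f t ω * (starRingEnd ℂ) (f t ω) = 1 := by
        intro ω
        rw [Complex.mul_conj, Complex.normSq_eq_norm_sq, hnorm]
        norm_num
      simp [h1, sub_self]
    · calc ∫ ω, f t ω * (starRingEnd ℂ) (f s ω) ∂P
          = ∫ ω, Complex.exp (Complex.I *
              ∑ j, (z j : ℂ) * ((X t ω j : ℂ) - (X s ω j : ℂ))) ∂P := by
            simp only [hmul]
        _ = Complex.exp (-((t - s : ℝ) : ℂ) * Ψ z) :=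
            levy_char_increment P X hX Ψ hΨ hs h.le z
        _ = Complex.exp (-(|t - s| : ℝ) * Ψ (Real.sign (t - s) • z)) := by
            rw [Real.sign_of_pos (by linarith : 0 < t - s), one_smul,
              abs_of_pos (by linarith : 0 < t - s)]
  have hgz : Continuous fun y : Fin d → ℝ =>
      Complex.exp (Complex.I * ∑ j, (z j : ℂ) * (y j : ℂ)) := by
    apply Complex.continuous_exp.comp
    exact continuous_const.mul (continuous_finset_sum _ fun j _ =>
      continuous_const.mul (Complex.continuous_ofReal.comp (continuous_apply j)))
  have haesm1 : AEStronglyMeasurable (fun p : ℝ × Ω => f p.1 p.2) (ν.prod P) :=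
    levy_aesm P X hX _ hgz ν hν hν0
  have haesm2 : AEStronglyMeasurable (fun p : ℝ × Ω => (starRingEnd ℂ) (f p.1 p.2)) (ν.prod P) :=
    levy_aesm P X hX _ (Complex.continuous_conj.comp hgz) ν hν hν0
  have hfst : MeasurePreserving (Prod.fst : ℝ × ℝ → ℝ) (ν.prod ν) ν :=
    ⟨measurable_fst, by simp [Measure.map_fst_prod]⟩
  have hsnd : MeasurePreserving (Prod.snd : ℝ × ℝ → ℝ) (ν.prod ν) ν :=
    ⟨measurable_snd, by simp [Measure.map_snd_prod]⟩
  have hπ1 : MeasurePreserving (fun q : (ℝ × ℝ) × Ω => (q.1.1, q.2))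
      ((ν.prod ν).prod P) (ν.prod P) := hfst.prod (MeasurePreserving.id P)
  have hπ2 : MeasurePreserving (fun q : (ℝ × ℝ) × Ω => (q.1.2, q.2))
      ((ν.prod ν).prod P) (ν.prod P) := hsnd.prod (MeasurePreserving.id P)
  have hc1 := haesm1.comp_measurePreserving hπ1
  have hc2 := haesm2.comp_measurePreserving hπ2
  simp only [Function.comp_def] at hc1 hc2
  have hH_aesm : AEStronglyMeasurable
      (fun q : (ℝ × ℝ) × Ω => f q.1.1 q.2 * (starRingEnd ℂ) (f q.1.2 q.2))
      ((ν.prod ν).prod P) := hc1.mul hc2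
  have hH_int : Integrable
      (fun q : (ℝ × ℝ) × Ω => f q.1.1 q.2 * (starRingEnd ℂ) (f q.1.2 q.2))
      ((ν.prod ν).prod P) := by
    refine (integrable_const (1:ℝ)).mono' hH_aesm ?_
    apply Eventually.of_forall
    intro q
    rw [norm_mul, RCLike.norm_conj, hnorm, hnorm]
    norm_num
  have haet : ∀ᵐ t ∂ν, t ∈ Set.Ici (0:ℝ) := by
    rw [ae_iff]
    have h := measure_compl (s := Set.Ici (0:ℝ)) measurableSet_Ici (measure_ne_top ν _)
    rw [hν0, measure_univ] at h
    simp at h ⊢; exact h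
  have key : energyForm Ψ ν z = ((∫ ω, ‖∫ t, f t ω ∂ν‖ ^ 2 ∂P : ℝ) : ℂ) := by
    calc energyForm Ψ ν z
        = ∫ t, ∫ s, ∫ ω, f t ω * (starRingEnd ℂ) (f s ω) ∂P ∂ν ∂ν := by
          rw [energyForm]
          refine integral_congr_ae ?_
          filter_upwards [haet] with t ht
          refine integral_congr_ae ?_
          filter_upwards [haet] with s hs
          exact (hchar t ht s hs).symm
      _ = ∫ p : ℝ × ℝ, ∫ ω, f p.1 ω * (starRingEnd ℂ) (f p.2 ω) ∂P ∂(ν.prod ν) :=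
          (MeasureTheory.integral_prod _ hH_int.integral_prod_left).symm
      _ = ∫ ω, ∫ p : ℝ × ℝ, f p.1 ω * (starRingEnd ℂ) (f p.2 ω) ∂(ν.prod ν) ∂P :=
          integral_integral_swap hH_int
      _ = ∫ ω, ((‖∫ t, f t ω ∂ν‖ ^ 2 : ℝ) : ℂ) ∂P := by
          refine integral_congr_ae (Eventually.of_forall fun ω => ?_)
          have h2 := integral_prod_mul (μ := ν) (ν := ν) (fun t => f t ω)
            (fun s => (starRingEnd ℂ) (f s ω))
          rw [integral_conj] at h2
          calc ∫ p : ℝ × ℝ, f p.1 ω * (starRingEnd ℂ) (f p.2 ω) ∂(ν.prod ν)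
              = (∫ t, f t ω ∂ν) * (starRingEnd ℂ) (∫ t, f t ω ∂ν) := h2
            _ = ((‖∫ t, f t ω ∂ν‖ ^ 2 : ℝ) : ℂ) := by
                rw [Complex.mul_conj, Complex.normSq_eq_norm_sq]
      _ = ((∫ ω, ‖∫ t, f t ω ∂ν‖ ^ 2 ∂P : ℝ) : ℂ) :=
          integral_ofReal (f := fun ω => ‖∫ t, f t ω ∂ν‖ ^ 2)
  refine ⟨key, ?_, ?_, ?_⟩
  · rw [key]
    exact Complex.ofReal_im _
  · rw [key, Complex.ofReal_re]
    exact integral_nonneg fun ω => sq_nonneg _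
  · rw [key, Complex.ofReal_re]
    have hb : ∀ ω, ‖∫ t, f t ω ∂ν‖ ^ 2 ≤ 1 := by
      intro ω
      have h1 : ‖∫ t, f t ω ∂ν‖ ≤ 1 := by
        calc ‖∫ t, f t ω ∂ν‖ ≤ ∫ t, ‖f t ω‖ ∂ν := norm_integral_le_integral_norm _
          _ = 1 := by simp [hnorm]
      calc ‖∫ t, f t ω ∂ν‖ ^ 2 ≤ 1 ^ 2 := pow_le_pow_left₀ (norm_nonneg _) h1 2
        _ = 1 := one_pow 2
    calc ∫ ω, ‖∫ t, f t ω ∂ν‖ ^ 2 ∂P ≤ ∫ _ω, (1:ℝ) ∂P :=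
        integral_mono_of_nonneg (Eventually.of_forall fun ω => sq_nonneg _)
          (integrable_const 1) (Eventually.of_forall hb)
      _ = 1 := by simp

end
end

section
/- Let X be a Lévy process in R^d, κ_ε(t) := P{X(t) ∈ B(0,ε)}, and P_{λ_d}(·) := ∫_{R^d} P^x(·) dx, where P^x is the law of x + X. Then for every nonrandom bounded Borel set F ⊆ [0,∞) and every ε > 0, P_{λ_d}{ inf_{t∈F} |X(t)| ≤ ε } ≤ 2^{d+1} (2ε)^d / ( inf_{ν∈P(F)} ∫∫ κ_ε(|t−s|) ν(ds) ν(dt) ). -/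
open MeasureTheory ProbabilityTheory Filter Set Metric Bornology
open scoped ENNReal NNReal Topology symmDiff Real

noncomputable section

namespace KXAux

variable {Ω : Type*} [MeasurableSpace Ω] {d : ℕ}

/-- ENNReal-valued kappa. -/
def kapE (P : Measure Ω) (X : ℝ → Ω → (Fin d → ℝ)) (r u : ℝ) : ℝ≥0∞ :=
  P {ω | X u ω ∈ Metric.ball (0 : Fin d → ℝ) r}

lemma kapE_le_one (P : Measure Ω) [IsProbabilityMeasure P] (X : ℝ → Ω → (Fin d → ℝ))
    (r u : ℝ) : kapE P X r u ≤ 1 := by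
  calc kapE P X r u ≤ P Set.univ := measure_mono (subset_univ _)
    _ = 1 := measure_univ

lemma kapE_mono (P : Measure Ω) (X : ℝ → Ω → (Fin d → ℝ)) {ε r : ℝ} (h : ε ≤ r) (u : ℝ) :
    kapE P X ε u ≤ kapE P X r u :=
  measure_mono (fun ω hω => Metric.ball_subset_ball h hω)

lemma slab_meas {u : ℝ} {X : ℝ → Ω → (Fin d → ℝ)} (hXm : Measurable (X u)) (ρ : ℝ) :
    MeasurableSet {p : Ω × (Fin d → ℝ) | ‖p.2 + X u p.1‖ < ρ} := by
  exact measurableSet_lt ((measurable_snd.add (hXm.comp measurable_fst)).norm) measurable_const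

lemma slab_vol (P : Measure Ω) [IsProbabilityMeasure P] {X : ℝ → Ω → (Fin d → ℝ)} {u : ℝ}
    (hXm : Measurable (X u)) {ρ : ℝ} (hρ : 0 < ρ) :
    (P.prod volume) {p : Ω × (Fin d → ℝ) | ‖p.2 + X u p.1‖ < ρ}
      = ENNReal.ofReal ((2*ρ)^d) := by
  rw [Measure.prod_apply (slab_meas hXm ρ)]
  have h : ∀ ω : Ω, (Prod.mk ω ⁻¹' {p : Ω × (Fin d → ℝ) | ‖p.2 + X u p.1‖ < ρ})
      = Metric.ball (-(X u ω)) ρ := by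
    intro ω
    ext x
    simp [Metric.mem_ball, dist_eq_norm, sub_neg_eq_add]
  simp only [h]
  have hv : ∀ ω : Ω, volume (Metric.ball (-(X u ω)) ρ) = ENNReal.ofReal ((2*ρ)^d) := by
    intro ω
    rw [Real.volume_pi_ball _ hρ]
    simp
  simp only [hv, lintegral_const, measure_univ, mul_one]

section Indep

variable (P : Measure Ω) (X : ℝ → Ω → (Fin d → ℝ))

/-- The independence core: the vector of `X(t k) - X 0` for `k ≤ i` is independent of the
increment `X (t j) - X (t i)`, for `i < j`. -/
lemma indep_core (hX : IsLevyProcess P X)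
    {m : ℕ} (t : Fin m → ℝ) (hmono : Monotone t) (ht0 : ∀ l, 0 ≤ t l)
    (i j : Fin m) (hij : i < j) :
    IndepFun (fun ω (k : Fin (i.1+1)) => X (t (Fin.castLE (by omega) k)) ω - X 0 ω)
      (fun ω => X (t j) ω - X (t i) ω) P := by
  have hm : 1 ≤ m := Nat.one_le_iff_ne_zero.mpr (by rintro rfl; exact absurd i.isLt (by omega))
  set u : ℕ → ℝ := fun k => if k = 0 then 0 else t ⟨min (k-1) (m-1), by omega⟩ with hu
  have hu0 : ∀ k, 0 ≤ u k := by
    intro k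
    by_cases h : k = 0 <;> simp [hu, h, ht0]
  have humono : Monotone u := by
    intro a b hab
    rcases Nat.eq_zero_or_pos a with ha | ha
    · subst ha; exact hu0 b
    · have hb : b ≠ 0 := by omega
      have ha' : a ≠ 0 := by omega
      simp only [hu, if_neg ha', if_neg hb]
      exact hmono (by simp [Fin.le_def]; omega)
  have hut : ∀ l : Fin m, u (l.1+1) = t l := by
    intro l
    have h1 : min l.1 (m-1) = l.1 := by have := l.isLt; omega
    simp only [hu, if_neg (Nat.succ_ne_zero _), Nat.add_sub_cancel, h1, Fin.eta]
  have hu00 : u 0 = 0 := by simp [hu]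
  set D : Fin (m+1) → Ω → (Fin d → ℝ) := fun l ω => X (u (l.1+1)) ω - X (u l.1) ω with hD
  have hDmeas : ∀ l, Measurable (D l) := fun l => (hX.meas _).sub (hX.meas _)
  have hIndep := hX.indep (m+1) u hu0 humono
  set S : Finset (Fin (m+1)) := Finset.univ.filter (fun l => l.1 ≤ i.1) with hS
  set T : Finset (Fin (m+1)) := Finset.univ.filter (fun l => i.1+1 ≤ l.1 ∧ l.1 ≤ j.1) with hT
  have hST : Disjoint S T := by
    rw [Finset.disjoint_left]
    intro a haS haT
    simp only [hS, hT, Finset.mem_filter] at haS haT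
    omega
  have base : IndepFun (fun ω (l : S) => D l ω) (fun ω (l : T) => D l ω) P :=
    hIndep.indepFun_finset S T hST hDmeas
  set φ : (S → (Fin d → ℝ)) → (Fin (i.1+1) → (Fin d → ℝ)) :=
    fun v k => ∑ l : S, if (l : Fin (m+1)).1 ≤ k.1 then v l else 0 with hφdef
  have hφ : Measurable φ := by
    apply measurable_pi_lambda
    intro k
    apply Finset.measurable_sum
    intro l _
    by_cases hc : (l : Fin (m+1)).1 ≤ k.1
    · simpa [hc] using measurable_pi_apply l
    · simpa [hc] using (measurable_const : Measurable fun _ : S → (Fin d → ℝ) => (0 : Fin d → ℝ))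
  set ψ : (T → (Fin d → ℝ)) → (Fin d → ℝ) := fun v => ∑ l : T, v l with hψdef
  have hψ : Measurable ψ := Finset.measurable_sum _ (fun l _ => measurable_pi_apply l)
  have comp := base.comp hφ hψ
  have key : ∀ (ω : Ω) (a : ℕ) (ha : a ≤ m),
      ∑ l ∈ Finset.univ.filter (fun l : Fin (m+1) => l.1 < a), D l ω = X (u a) ω - X 0 ω := by
    intro ω a ha
    have : ∑ l ∈ Finset.univ.filter (fun l : Fin (m+1) => l.1 < a), D l ω
        = ∑ n ∈ Finset.range a, (X (u (n+1)) ω - X (u n) ω) := by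
      refine Finset.sum_nbij' (i := fun (l : Fin (m+1)) => l.1)
        (j := fun n => (⟨min n m, by omega⟩ : Fin (m+1))) ?_ ?_ ?_ ?_ ?_
      · intro l hl; simp only [Finset.mem_filter] at hl
        simp only [Finset.mem_range]; exact hl.2
      · intro n hn; simp only [Finset.mem_range] at hn
        simp only [Finset.mem_filter, Finset.mem_univ, true_and]; omega
      · intro l hl; simp only [Finset.mem_filter] at hl
        apply Fin.ext; simp; omega
      · intro n hn; simp only [Finset.mem_range] at hn; simp; omega
      · intro l hl; simp only [Finset.mem_filter] at hl
        have h1 : min l.1 m = l.1 := by omega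
        simp only [hD, h1]
    rw [this, Finset.sum_range_sub (fun n => X (u n) ω), hu00]
  have e1 : (fun ω (k : Fin (i.1+1)) => X (t (Fin.castLE (by omega) k)) ω - X 0 ω)
      = φ ∘ (fun ω (l : S) => D l ω) := by
    funext ω k
    show X (t (Fin.castLE (by omega) k)) ω - X 0 ω = φ (fun l : S => D l ω) k
    have h1 : φ (fun l : S => D l ω) k
        = ∑ l ∈ S, if l.1 ≤ k.1 then D l ω else 0 :=
      Finset.sum_coe_sort S (fun l => if l.1 ≤ k.1 then D l ω else 0)
    rw [h1, ← Finset.sum_filter]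
    have h2 : S.filter (fun l => l.1 ≤ k.1)
        = Finset.univ.filter (fun l : Fin (m+1) => l.1 < k.1 + 1) := by
      ext l
      simp only [hS, Finset.mem_filter, Finset.filter_filter, Finset.mem_univ, true_and]
      have := k.isLt
      omega
    rw [h2, key ω (k.1+1) (by have := k.isLt; have := i.isLt; omega)]
    have h3 : u (k.1+1) = t (Fin.castLE (by omega : i.1+1 ≤ m) k) := by
      have := hut (Fin.castLE (by omega : i.1+1 ≤ m) k)
      simpa using this
    rw [h3]
  have e2 : (fun ω => X (t j) ω - X (t i) ω) = ψ ∘ (fun ω (l : T) => D l ω) := by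
    funext ω
    show X (t j) ω - X (t i) ω = ψ (fun l : T => D l ω)
    have h1 : ψ (fun l : T => D l ω) = ∑ l ∈ T, D l ω :=
      Finset.sum_coe_sort T (fun l => D l ω)
    have h2 : T = (Finset.univ.filter (fun l : Fin (m+1) => l.1 < j.1+1)) \
        (Finset.univ.filter (fun l : Fin (m+1) => l.1 < i.1+1)) := by
      ext l
      simp only [hT, Finset.mem_filter, Finset.mem_sdiff, Finset.mem_univ, true_and]
      omega
    have hsub : (Finset.univ.filter (fun l : Fin (m+1) => l.1 < i.1+1))
        ⊆ (Finset.univ.filter (fun l : Fin (m+1) => l.1 < j.1+1)) := by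
      intro l hl
      simp only [Finset.mem_filter, Finset.mem_univ, true_and] at hl ⊢
      have hij' := hij
      rw [Fin.lt_def] at hij'
      omega
    rw [h1, h2, Finset.sum_sdiff_eq_sub hsub,
      key ω (j.1+1) (by have := j.isLt; omega), key ω (i.1+1) (by have := i.isLt; omega),
      hut j, hut i]
    abel
  rw [e1, e2]
  exact comp

end Indep
end KXAux
namespace KXAux
section Key2
set_option maxHeartbeats 1000000

variable {Ω : Type*} [MeasurableSpace Ω] {d : ℕ}
variable (P : Measure Ω) (X : ℝ → Ω → (Fin d → ℝ))

/-- First-hitting-at-index-`i` event among the grid times. -/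
def Aset (r : ℝ) {m : ℕ} (t : Fin m → ℝ) (i : Fin m) : Set (Ω × (Fin d → ℝ)) :=
  {p | ‖p.2 + X (t i) p.1‖ < r ∧ ∀ k, k < i → ¬(‖p.2 + X (t k) p.1‖ < r)}

lemma Aset_eq (r : ℝ) {m : ℕ} (t : Fin m → ℝ) (i : Fin m) :
    Aset X r t i = {p : Ω × (Fin d → ℝ) | ‖p.2 + X (t i) p.1‖ < r}
      ∩ ⋂ (k : Fin m), ⋂ (_ : k < i), {p : Ω × (Fin d → ℝ) | ‖p.2 + X (t k) p.1‖ < r}ᶜ := by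
  ext p
  simp only [Aset, Set.mem_setOf_eq, Set.mem_inter_iff, Set.mem_iInter, Set.mem_compl_iff]

lemma Aset_meas (hXm : ∀ s, Measurable (X s)) (r : ℝ) {m : ℕ} (t : Fin m → ℝ) (i : Fin m) :
    MeasurableSet (Aset X r t i) := by
  rw [Aset_eq]
  exact (slab_meas (hXm _) r).inter
    (MeasurableSet.iInter fun k => MeasurableSet.iInter fun _ => (slab_meas (hXm _) r).compl)

lemma kapE_zero (hX : IsLevyProcess P X) {r : ℝ} (hr : 0 < r) : kapE P X r 0 = 1 := by
  haveI := hX.isProb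
  have h1 : {ω | X 0 ω ∈ Metric.ball (0 : Fin d → ℝ) r} =ᵐ[P] (Set.univ : Set Ω) := by
    rw [Filter.eventuallyEq_set]
    filter_upwards [hX.zero] with ω h0
    simp [h0, hr]
  rw [kapE, measure_congr h1, measure_univ]

lemma coord_slab_meas {n : ℕ} (x : Fin d → ℝ) (a : Fin n) (r : ℝ) :
    MeasurableSet {v : Fin n → (Fin d → ℝ) | ‖x + v a‖ < r} :=
  measurableSet_lt (by fun_prop) measurable_const

lemma key2 (hX : IsLevyProcess P X) {m : ℕ} (t : Fin m → ℝ) (hmono : Monotone t)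
    (ht0 : ∀ l, 0 ≤ t l) (i j : Fin m) (hij : i ≤ j) {r : ℝ} (hr : 0 < r) :
    (P.prod volume) (Aset X r t i ∩ {p | X (t j) p.1 - X (t i) p.1 ∈ Metric.ball 0 r})
      = (P.prod volume) (Aset X r t i) * kapE P X r (t j - t i) := by
  haveI := hX.isProb
  rcases eq_or_lt_of_le hij with rfl | hlt
  · have h1 : {p : Ω × (Fin d → ℝ) | X (t i) p.1 - X (t i) p.1 ∈ Metric.ball 0 r}
        = Set.univ := by
      ext p; simp [sub_self, hr]
    have h2 : t i - t i = 0 := sub_self _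
    rw [h1, Set.inter_univ, h2, kapE_zero P X hX hr, mul_one]
  · -- i < j
    have hijle : i ≤ j := le_of_lt hlt
    set g : Ω → (Fin d → ℝ) := fun ω => X (t j) ω - X (t i) ω with hg
    have hgmeas : Measurable g := (hX.meas _).sub (hX.meas _)
    have hPG : P (g ⁻¹' Metric.ball 0 r) = kapE P X r (t j - t i) := by
      have hst := hX.stationary (t i) (t j) (ht0 i) (hmono hijle)
      have h1 : P (g ⁻¹' Metric.ball 0 r)
          = Measure.map g P (Metric.ball 0 r) := by
        rw [Measure.map_apply hgmeas measurableSet_ball]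
      rw [h1, hst, Measure.map_apply (hX.meas _) measurableSet_ball]
      rfl
    set W : Ω → (Fin (i.1+1) → (Fin d → ℝ)) :=
      fun ω k => X (t (Fin.castLE (by omega) k)) ω - X 0 ω with hW
    have hIndep : IndepFun W g P := indep_core P X hX t hmono ht0 i j hlt
    -- pointwise in x independence
    have hxind : ∀ x : Fin d → ℝ,
        P ((fun ω => (ω, x)) ⁻¹' (Aset X r t i ∩ {p | X (t j) p.1 - X (t i) p.1 ∈ Metric.ball 0 r}))
          = P ((fun ω => (ω, x)) ⁻¹' Aset X r t i) * kapE P X r (t j - t i) := by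
      intro x
      set C : Set (Fin (i.1+1) → (Fin d → ℝ)) :=
        {v | ‖x + v (Fin.last i.1)‖ < r} ∩
          ⋂ (k : Fin m), ⋂ (_ : k < i),
            {v : Fin (i.1+1) → (Fin d → ℝ) |
              ‖x + v (⟨k.1, by have := Fin.lt_def.mp ‹k < i›; omega⟩ : Fin (i.1+1))‖ < r}ᶜ
        with hC
      have hCmeas : MeasurableSet C := by
        refine MeasurableSet.inter (coord_slab_meas x _ r)
          (MeasurableSet.iInter fun k => MeasurableSet.iInter fun hk =>
            (coord_slab_meas x _ r).compl)
      have hsec : ((fun ω => (ω, x)) ⁻¹' Aset X r t i) =ᵐ[P] W ⁻¹' C := by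
        rw [Filter.eventuallyEq_set]
        filter_upwards [hX.zero] with ω h0
        have hWk : ∀ (k : Fin m) (hk : k.1 < i.1 + 1),
            W ω ⟨k.1, hk⟩ = X (t k) ω := by
          intro k hk
          have hcast : Fin.castLE (by omega : i.1+1 ≤ m) (⟨k.1, hk⟩ : Fin (i.1+1)) = k :=
            Fin.ext rfl
          simp only [hW, hcast, h0, sub_zero]
        constructor
        · rintro ⟨hc1, hc2⟩
          constructor
          · show ‖x + W ω (Fin.last i.1)‖ < r
            have : W ω (Fin.last i.1) = X (t i) ω := by
              have := hWk i (by omega)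
              simpa [Fin.last] using this
            rw [this]; exact hc1
          · simp only [Set.mem_iInter, Set.mem_compl_iff, Set.mem_setOf_eq]
            intro k hk
            rw [hWk k (by have := Fin.lt_def.mp hk; omega)]
            exact hc2 k hk
        · rintro ⟨hc1, hc2⟩
          simp only [Set.mem_iInter, Set.mem_compl_iff, Set.mem_setOf_eq] at hc2
          constructor
          · have : W ω (Fin.last i.1) = X (t i) ω := by
              have := hWk i (by omega)
              simpa [Fin.last] using this
            rw [← this]; exact hc1
          · intro k hk
            have := hc2 k hk
            rwa [hWk k (by have := Fin.lt_def.mp hk; omega)] at this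
      have hsec2 : ((fun ω => (ω, x)) ⁻¹'
            (Aset X r t i ∩ {p | X (t j) p.1 - X (t i) p.1 ∈ Metric.ball 0 r}))
          =ᵐ[P] ((W ⁻¹' C ∩ g ⁻¹' Metric.ball 0 r : Set Ω)) := by
        rw [Set.preimage_inter, Filter.eventuallyEq_set]
        filter_upwards [Filter.eventuallyEq_set.mp hsec] with ω hiff
        exact and_congr hiff Iff.rfl
      rw [measure_congr hsec2, measure_congr hsec,
        hIndep.measure_inter_preimage_eq_mul C (Metric.ball 0 r) hCmeas measurableSet_ball,
        hPG]
    -- Fubini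
    have hmeasA : MeasurableSet (Aset X r t i) := Aset_meas X hX.meas r t i
    have hmeasG : MeasurableSet {p : Ω × (Fin d → ℝ) | X (t j) p.1 - X (t i) p.1 ∈ Metric.ball 0 r} :=
      (hgmeas.comp measurable_fst) measurableSet_ball
    rw [Measure.prod_apply_symm (hmeasA.inter hmeasG), Measure.prod_apply_symm hmeasA]
    calc ∫⁻ x, P ((fun ω => (ω, x)) ⁻¹'
          (Aset X r t i ∩ {p | X (t j) p.1 - X (t i) p.1 ∈ Metric.ball 0 r})) ∂volume
        = ∫⁻ x, P ((fun ω => (ω, x)) ⁻¹' Aset X r t i) * kapE P X r (t j - t i) ∂volume := by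
          congr 1; funext x; exact hxind x
      _ = (∫⁻ x, P ((fun ω => (ω, x)) ⁻¹' Aset X r t i) ∂volume) * kapE P X r (t j - t i) := by
          rw [lintegral_mul_const _ (measurable_measure_prodMk_right hmeasA)]

end Key2
end KXAux
namespace KXAux
section Finite
set_option maxHeartbeats 2000000

variable {Ω : Type*} [MeasurableSpace Ω] {d : ℕ}
variable (P : Measure Ω) (X : ℝ → Ω → (Fin d → ℝ))

lemma integrable_smul_dirac (f : ℝ → ℝ) (a : ℝ) (c : ℝ≥0∞) (hc : c ≠ ∞) :
    Integrable f (c • Measure.dirac a) := by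
  rcases eq_or_ne c 0 with rfl | hc0
  · simp only [zero_smul]
    exact integrable_zero_measure
  · rw [integrable_smul_measure hc0 hc]
    have hae : f =ᵐ[Measure.dirac a] (fun _ => f a) := by
      rw [Filter.EventuallyEq, ae_iff]
      have : {x | ¬ f x = f a} = {x | f x ≠ f a} := rfl
      rw [this]
      rw [Measure.dirac_apply]
      simp [Set.indicator_apply]
    exact (integrable_const (f a)).congr hae.symm

lemma integral_smul_dirac (f : ℝ → ℝ) (a : ℝ) (c : ℝ≥0∞) :
    ∫ x, f x ∂(c • Measure.dirac a) = c.toReal * f a := by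
  rw [integral_smul_measure, MeasureTheory.integral_dirac, smul_eq_mul]

lemma finite_grid (hX : IsLevyProcess P X) (F : Set ℝ) (hFmeas : MeasurableSet F)
    (hF : F ⊆ Set.Ici 0) {m : ℕ} (τ : Fin m → ℝ) (hmono : Monotone τ) (htF : ∀ l, τ l ∈ F)
    {ε r : ℝ} (hε : 0 < ε) (hεr : ε ≤ r) (hFne : F.Nonempty) :
    ENNReal.ofReal (⨅ ν : ProbOn F, ∫ t, ∫ s, kappa P X ε |t - s| ∂ν.1 ∂ν.1)
        * (P.prod volume) {p : Ω × (Fin d → ℝ) | ∃ l, ‖p.2 + X (τ l) p.1‖ < r}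
      ≤ ENNReal.ofReal (2 ^ (d + 1) * (2 * r) ^ d) := by
  haveI := hX.isProb
  have hr : 0 < r := lt_of_lt_of_le hε hεr
  obtain ⟨t₀, ht₀⟩ := hFne
  haveI : Nonempty (ProbOn F) := by
    refine ⟨⟨Measure.dirac t₀, ?_, ?_⟩⟩
    · infer_instance
    · rw [Measure.dirac_apply' _ hFmeas]
      simp [ht₀]
  have hbdd : BddBelow (Set.range fun ν : ProbOn F =>
      ∫ t, ∫ s, kappa P X ε |t - s| ∂ν.1 ∂ν.1) := by
    refine ⟨0, ?_⟩
    rintro y ⟨ν, rfl⟩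
    exact integral_nonneg fun s => integral_nonneg fun s' => ENNReal.toReal_nonneg
  rcases Nat.eq_zero_or_pos m with rfl | hm
  · have hB : {p : Ω × (Fin d → ℝ) | ∃ l, ‖p.2 + X (τ l) p.1‖ < r} = ∅ := by
      ext p; simp only [Set.mem_setOf_eq, Set.mem_empty_iff_false, iff_false]
      rintro ⟨l, -⟩; exact l.elim0
    rw [hB, measure_empty, mul_zero]
    exact zero_le
  -- main case
  set μL : Measure (Ω × (Fin d → ℝ)) := P.prod (volume : Measure (Fin d → ℝ)) with hμL
  set A : Fin m → Set (Ω × (Fin d → ℝ)) := fun i => Aset X r τ i with hA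
  have hmeasA : ∀ i, MeasurableSet (A i) := fun i => Aset_meas X hX.meas r τ i
  have hAdisj : Pairwise (Function.onFun Disjoint A) := by
    intro i j hne
    rcases lt_or_gt_of_ne hne with hlt | hlt
    · rw [Function.onFun, Set.disjoint_left]
      rintro p ⟨h1, -⟩ ⟨-, h2⟩
      exact h2 i hlt h1
    · rw [Function.onFun, Set.disjoint_left]
      rintro p ⟨-, h2⟩ ⟨h1, -⟩
      exact h2 j hlt h1
  have hBA : {p : Ω × (Fin d → ℝ) | ∃ l, ‖p.2 + X (τ l) p.1‖ < r} = ⋃ i, A i := by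
    ext p
    simp only [Set.mem_setOf_eq, Set.mem_iUnion]
    constructor
    · rintro ⟨l, hl⟩
      have hex : ∃ n, ∃ (h : n < m), ‖p.2 + X (τ ⟨n, h⟩) p.1‖ < r := ⟨l.1, l.isLt, by
        simpa [Fin.eta] using hl⟩
      obtain ⟨hn, hSpec⟩ := Nat.find_spec hex
      refine ⟨⟨Nat.find hex, hn⟩, hSpec, ?_⟩
      intro k hk hcon
      exact Nat.find_min hex (by rwa [Fin.lt_def] at hk) ⟨k.isLt, by simpa [Fin.eta] using hcon⟩
    · rintro ⟨i, hi, -⟩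
      exact ⟨i, hi⟩
  set q : Fin m → ℝ≥0∞ := fun i => μL (A i) with hq
  set p : ℝ≥0∞ := ∑ i, q i with hp
  have hμB : μL {p : Ω × (Fin d → ℝ) | ∃ l, ‖p.2 + X (τ l) p.1‖ < r} = p := by
    rw [hBA, measure_iUnion hAdisj hmeasA, tsum_fintype]
  have hqle : ∀ i, q i ≤ ENNReal.ofReal ((2*r)^d) := by
    intro i
    have hsub : A i ⊆ {p : Ω × (Fin d → ℝ) | ‖p.2 + X (τ i) p.1‖ < r} := fun p hp => hp.1
    calc q i ≤ μL {p : Ω × (Fin d → ℝ) | ‖p.2 + X (τ i) p.1‖ < r} := measure_mono hsub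
      _ = ENNReal.ofReal ((2*r)^d) := slab_vol P (hX.meas _) hr
  have hptop : p ≠ ∞ := by
    rw [hp]
    exact ENNReal.sum_ne_top.mpr fun i _ => (lt_of_le_of_lt (hqle i) ENNReal.ofReal_lt_top).ne
  rcases eq_or_ne p 0 with hp0 | hp0
  · rw [hμB, hp0, mul_zero]
    exact zero_le
  -- the second-moment computation
  set C : ℝ≥0∞ := ENNReal.ofReal ((2*(2*r))^d) with hC
  have key3 : ∀ j : Fin m, ∑ i ∈ Finset.univ.filter (· ≤ j), q i * kapE P X r (τ j - τ i) ≤ C := by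
    intro j
    have hterm : ∀ i ∈ Finset.univ.filter (· ≤ j),
        μL (A i ∩ {p : Ω × (Fin d → ℝ) | X (τ j) p.1 - X (τ i) p.1 ∈ Metric.ball 0 r})
          = q i * kapE P X r (τ j - τ i) := by
      intro i hi
      simp only [Finset.mem_filter] at hi
      exact key2 P X hX τ hmono (fun l => hF (htF l)) i j hi.2 hr
    have hdisj : (↑(Finset.univ.filter (· ≤ j)) : Set (Fin m)).PairwiseDisjoint
        (fun i => A i ∩ {p : Ω × (Fin d → ℝ) | X (τ j) p.1 - X (τ i) p.1 ∈ Metric.ball 0 r}) := by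
      intro a _ b _ hab
      exact Disjoint.mono Set.inter_subset_left Set.inter_subset_left (hAdisj hab)
    have hmeas' : ∀ i ∈ Finset.univ.filter (· ≤ j), MeasurableSet
        (A i ∩ {p : Ω × (Fin d → ℝ) | X (τ j) p.1 - X (τ i) p.1 ∈ Metric.ball 0 r}) := by
      intro i _
      exact (hmeasA i).inter ((((hX.meas _).sub (hX.meas _)).comp measurable_fst) measurableSet_ball)
    have hunion_sub : (⋃ i ∈ Finset.univ.filter (· ≤ j),
        (A i ∩ {p : Ω × (Fin d → ℝ) | X (τ j) p.1 - X (τ i) p.1 ∈ Metric.ball 0 r}))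
          ⊆ {p : Ω × (Fin d → ℝ) | ‖p.2 + X (τ j) p.1‖ < 2*r} := by
      intro pt hpt
      simp only [Set.mem_iUnion] at hpt
      obtain ⟨i, _, ⟨hA1, -⟩, hball⟩ := hpt
      simp only [Set.mem_setOf_eq, mem_ball_zero_iff] at hball ⊢
      have : pt.2 + X (τ j) pt.1 = (pt.2 + X (τ i) pt.1) + (X (τ j) pt.1 - X (τ i) pt.1) := by abel
      rw [this]
      calc ‖(pt.2 + X (τ i) pt.1) + (X (τ j) pt.1 - X (τ i) pt.1)‖
          ≤ ‖pt.2 + X (τ i) pt.1‖ + ‖X (τ j) pt.1 - X (τ i) pt.1‖ := norm_add_le _ _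
        _ < r + r := add_lt_add hA1 hball
        _ = 2*r := by ring
    calc ∑ i ∈ Finset.univ.filter (· ≤ j), q i * kapE P X r (τ j - τ i)
        = ∑ i ∈ Finset.univ.filter (· ≤ j),
            μL (A i ∩ {p : Ω × (Fin d → ℝ) | X (τ j) p.1 - X (τ i) p.1 ∈ Metric.ball 0 r}) :=
          (Finset.sum_congr rfl hterm).symm
      _ = μL (⋃ i ∈ Finset.univ.filter (· ≤ j),
            (A i ∩ {p : Ω × (Fin d → ℝ) | X (τ j) p.1 - X (τ i) p.1 ∈ Metric.ball 0 r})) :=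
          (measure_biUnion_finset hdisj hmeas').symm
      _ ≤ μL {p : Ω × (Fin d → ℝ) | ‖p.2 + X (τ j) p.1‖ < 2*r} := measure_mono hunion_sub
      _ = C := slab_vol P (hX.meas _) (by linarith)
  have key4 : ∑ j, q j * (∑ i ∈ Finset.univ.filter (· ≤ j), q i * kapE P X r (τ j - τ i))
      ≤ p * C := by
    calc ∑ j, q j * (∑ i ∈ Finset.univ.filter (· ≤ j), q i * kapE P X r (τ j - τ i))
        ≤ ∑ j, q j * C := Finset.sum_le_sum fun j _ => mul_le_mul_right (key3 j) _
      _ = p * C := by rw [hp, Finset.sum_mul]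
  set DS : ℝ≥0∞ := ∑ j, ∑ i, q j * (q i * kapE P X ε |τ j - τ i|) with hDS
  have key5 : DS ≤ 2 * (p * C) := by
    have hterm : ∀ j i : Fin m, q j * (q i * kapE P X ε |τ j - τ i|)
        ≤ (if i ≤ j then q j * (q i * kapE P X r (τ j - τ i)) else 0)
          + (if j ≤ i then q i * (q j * kapE P X r (τ i - τ j)) else 0) := by
      intro j i
      rcases le_total i j with hle | hle
      · have habs : |τ j - τ i| = τ j - τ i := abs_of_nonneg (sub_nonneg.2 (hmono hle))
        rw [if_pos hle, habs]
        refine le_add_right (mul_le_mul_right (mul_le_mul_right (kapE_mono P X hεr _) _) _)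
      · have habs : |τ j - τ i| = τ i - τ j := by
          rw [abs_sub_comm]
          exact abs_of_nonneg (sub_nonneg.2 (hmono hle))
        rw [if_pos hle, habs]
        refine le_add_left ?_
        calc q j * (q i * kapE P X ε (τ i - τ j))
            ≤ q j * (q i * kapE P X r (τ i - τ j)) :=
              mul_le_mul_right (mul_le_mul_right (kapE_mono P X hεr _) _) _
          _ = q i * (q j * kapE P X r (τ i - τ j)) := by ring
    calc DS ≤ ∑ j, ∑ i, ((if i ≤ j then q j * (q i * kapE P X r (τ j - τ i)) else 0)
          + (if j ≤ i then q i * (q j * kapE P X r (τ i - τ j)) else 0)) :=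
        Finset.sum_le_sum fun j _ => Finset.sum_le_sum fun i _ => hterm j i
      _ = (∑ j, ∑ i, if i ≤ j then q j * (q i * kapE P X r (τ j - τ i)) else 0)
          + (∑ j, ∑ i, if j ≤ i then q i * (q j * kapE P X r (τ i - τ j)) else 0) := by
        rw [← Finset.sum_add_distrib]
        congr 1
        funext j
        rw [← Finset.sum_add_distrib]
      _ ≤ p * C + p * C := by
        refine add_le_add ?_ ?_
        · calc (∑ j, ∑ i, if i ≤ j then q j * (q i * kapE P X r (τ j - τ i)) else 0)
              = ∑ j, q j * (∑ i ∈ Finset.univ.filter (· ≤ j), q i * kapE P X r (τ j - τ i)) := by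
                refine Finset.sum_congr rfl fun j _ => ?_
                rw [Finset.mul_sum, Finset.sum_filter]
            _ ≤ p * C := key4
        · calc (∑ j, ∑ i, if j ≤ i then q i * (q j * kapE P X r (τ i - τ j)) else 0)
              = ∑ i, ∑ j, if j ≤ i then q i * (q j * kapE P X r (τ i - τ j)) else 0 :=
                Finset.sum_comm
            _ = ∑ i, q i * (∑ j ∈ Finset.univ.filter (· ≤ i), q j * kapE P X r (τ i - τ j)) := by
                refine Finset.sum_congr rfl fun i _ => ?_
                rw [Finset.mul_sum, Finset.sum_filter]
            _ ≤ p * C := key4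
      _ = 2 * (p * C) := (two_mul _).symm
  -- the discrete measure
  set c : Fin m → ℝ≥0∞ := fun i => q i / p with hc
  have hcne : ∀ i, c i ≠ ∞ := by
    intro i
    rw [hc]
    simp only [ne_eq, ENNReal.div_eq_top]
    push_neg
    constructor
    · intro _; exact hp0
    · intro hqi; exact absurd hqi (by
        have := lt_of_le_of_lt (hqle i) ENNReal.ofReal_lt_top
        exact this.ne)
  have hcsum : ∑ i, c i = 1 := by
    rw [hc]
    have : ∑ i, q i / p = (∑ i, q i) * p⁻¹ := by
      rw [Finset.sum_mul]
      refine Finset.sum_congr rfl fun i _ => ?_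
      rw [ENNReal.div_eq_inv_mul, mul_comm]
    rw [this, ← hp, ENNReal.mul_inv_cancel hp0 hptop]
  set ν : Measure ℝ := ∑ i, c i • Measure.dirac (τ i) with hν
  have hνapp : ∀ s : Set ℝ, ν s = ∑ i, c i * Measure.dirac (τ i) s := by
    intro s
    rw [hν, Measure.finset_sum_apply]
    refine Finset.sum_congr rfl fun i _ => ?_
    rw [Measure.smul_apply, smul_eq_mul]
  have hνprob : IsProbabilityMeasure ν := by
    constructor
    rw [hνapp]
    simp only [measure_univ, mul_one]
    exact hcsum
  have hνF : ν F = 1 := by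
    rw [hνapp]
    have : ∀ i : Fin m, Measure.dirac (τ i) F = 1 := by
      intro i
      rw [Measure.dirac_apply' _ hFmeas]
      simp [htF i]
    simp only [this, mul_one]
    exact hcsum
  have hνmem : ν ∈ ProbOn F := ⟨hνprob, hνF⟩
  -- integral computation
  have hval : ∀ f : ℝ → ℝ, ∫ s, f s ∂ν = ∑ i, (c i).toReal * f (τ i) := by
    intro f
    rw [hν, integral_finset_sum_measure (fun i _ => integrable_smul_dirac f (τ i) (c i) (hcne i))]
    exact Finset.sum_congr rfl fun i _ => integral_smul_dirac f (τ i) (c i)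
  have hE : (∫ t, ∫ s, kappa P X ε |t - s| ∂ν ∂ν)
      = ∑ j, (c j).toReal * ∑ i, (c i).toReal * kappa P X ε |τ j - τ i| := by
    rw [hval (fun t => ∫ s, kappa P X ε |t - s| ∂ν)]
    refine Finset.sum_congr rfl fun j _ => ?_
    rw [hval (fun s => kappa P X ε |τ j - s|)]
  set SE : ℝ≥0∞ := ∑ j, ∑ i, c j * (c i * kapE P X ε |τ j - τ i|) with hSE
  have hkapne : ∀ u, kapE P X ε u ≠ ∞ := fun u => (lt_of_le_of_lt (kapE_le_one P X ε u)
    ENNReal.one_lt_top).ne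
  have htermne : ∀ j i : Fin m, c j * (c i * kapE P X ε |τ j - τ i|) ≠ ∞ :=
    fun j i => ENNReal.mul_ne_top (hcne j) (ENNReal.mul_ne_top (hcne i) (hkapne _))
  have hE_SE : (∫ t, ∫ s, kappa P X ε |t - s| ∂ν ∂ν) = SE.toReal := by
    rw [hE, hSE, ENNReal.toReal_sum (fun j _ => by
      exact (lt_of_le_of_lt (le_of_eq rfl) (lt_top_iff_ne_top.mpr
        (by exact ENNReal.sum_ne_top.mpr fun i _ => htermne j i))).ne)]
    refine Finset.sum_congr rfl fun j _ => ?_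
    rw [ENNReal.toReal_sum (fun i _ => htermne j i), Finset.mul_sum]
    refine Finset.sum_congr rfl fun i _ => ?_
    rw [ENNReal.toReal_mul, ENNReal.toReal_mul]
    rfl
  have hSE_le : SE ≤ 2 * C * p⁻¹ := by
    have h1 : SE = p⁻¹ * (p⁻¹ * DS) := by
      rw [hSE, hDS]
      simp only [Finset.mul_sum]
      refine Finset.sum_congr rfl fun j _ => Finset.sum_congr rfl fun i _ => ?_
      simp only [hc, ENNReal.div_eq_inv_mul]
      ring
    rw [h1]
    calc p⁻¹ * (p⁻¹ * DS) ≤ p⁻¹ * (p⁻¹ * (2 * (p * C))) :=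
        mul_le_mul_right (mul_le_mul_right key5 _) _
      _ = 2 * C * p⁻¹ * (p⁻¹ * p) := by ring
      _ = 2 * C * p⁻¹ := by rw [ENNReal.inv_mul_cancel hp0 hptop, mul_one]
  have hSEtop : SE ≠ ∞ := by
    refine (lt_of_le_of_lt hSE_le ?_).ne
    refine ENNReal.mul_lt_top (ENNReal.mul_lt_top ?_ ?_) ?_
    · exact ENNReal.ofNat_lt_top
    · rw [hC]; exact ENNReal.ofReal_lt_top
    · simp only [ENNReal.inv_lt_top]
      exact (zero_lt_iff).mpr hp0
  -- conclude
  have hinf_le : (⨅ ν : ProbOn F, ∫ t, ∫ s, kappa P X ε |t - s| ∂ν.1 ∂ν.1)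
      ≤ ∫ t, ∫ s, kappa P X ε |t - s| ∂ν ∂ν := ciInf_le hbdd ⟨ν, hνmem⟩
  have hofreal : ENNReal.ofReal (⨅ ν : ProbOn F, ∫ t, ∫ s, kappa P X ε |t - s| ∂ν.1 ∂ν.1)
      ≤ SE := by
    calc ENNReal.ofReal (⨅ ν : ProbOn F, ∫ t, ∫ s, kappa P X ε |t - s| ∂ν.1 ∂ν.1)
        ≤ ENNReal.ofReal (∫ t, ∫ s, kappa P X ε |t - s| ∂ν ∂ν) := ENNReal.ofReal_le_ofReal hinf_le
      _ = ENNReal.ofReal SE.toReal := by rw [hE_SE]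
      _ = SE := ENNReal.ofReal_toReal hSEtop
  rw [hμB]
  calc ENNReal.ofReal (⨅ ν : ProbOn F, ∫ t, ∫ s, kappa P X ε |t - s| ∂ν.1 ∂ν.1) * p
      ≤ SE * p := mul_le_mul_left hofreal _
    _ ≤ (2 * C * p⁻¹) * p := mul_le_mul_left hSE_le _
    _ = 2 * C * (p⁻¹ * p) := by ring
    _ = 2 * C := by rw [ENNReal.inv_mul_cancel hp0 hptop, mul_one]
    _ = ENNReal.ofReal (2 ^ (d + 1) * (2 * r) ^ d) := by
        rw [hC, ← ENNReal.ofReal_ofNat 2, ← ENNReal.ofReal_mul (by norm_num)]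
        congr 1
        rw [mul_pow, pow_succ]
        ring

end Finite
end KXAux
namespace KXAux
section Dense

/-- Points of `F` that are isolated from the right within `F` form a countable set. -/
lemma countable_right_isolated (F : Set ℝ) :
    {t | t ∈ F ∧ ∃ δ > 0, ∀ s ∈ F, ¬ (t < s ∧ s < t + δ)}.Countable := by
  classical
  set R := {t | t ∈ F ∧ ∃ δ > 0, ∀ s ∈ F, ¬ (t < s ∧ s < t + δ)} with hR
  have hsel : ∀ t ∈ R, ∃ qr : ℚ, t < (qr : ℝ) ∧ ∀ s ∈ F, t < s → (qr : ℝ) < s := by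
    rintro t ⟨htF, δ, hδ, hiso⟩
    obtain ⟨qr, hq1, hq2⟩ := exists_rat_btwn (lt_add_of_pos_right t hδ)
    refine ⟨qr, hq1, ?_⟩
    intro s hsF hts
    have := hiso s hsF
    push_neg at this
    have h2 := this hts
    linarith
  choose! f hf1 hf2 using hsel
  rw [Set.countable_iff_exists_injOn]
  refine ⟨fun t => Encodable.encode (f t), ?_⟩
  intro a ha b hb hab
  have hfab : f a = f b := Encodable.encode_injective hab
  by_contra hne
  rcases lt_or_gt_of_ne hne with hlt | hlt
  · have h1 := hf2 a ha b hb.1 hlt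
    have h2 := hf1 b hb
    rw [hfab] at h1
    linarith
  · have h1 := hf2 b hb a ha.1 hlt
    have h2 := hf1 a ha
    rw [← hfab] at h1
    linarith

/-- A countable subset of `F` that is dense in `F` from the right. -/
lemma exists_countable_rdense (F : Set ℝ) (hFne : F.Nonempty) :
    ∃ S : Set ℝ, S ⊆ F ∧ S.Countable ∧ S.Nonempty ∧
      ∀ t ∈ F, ∀ η > 0, ∃ s ∈ S, t ≤ s ∧ s < t + η := by
  classical
  obtain ⟨t₀, ht₀⟩ := hFne
  obtain ⟨s₀, hs₀c, hs₀d⟩ := TopologicalSpace.exists_countable_dense (↥F)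
  set S₀ : Set ℝ := Subtype.val '' s₀ with hS₀
  set R := {t | t ∈ F ∧ ∃ δ > 0, ∀ s ∈ F, ¬ (t < s ∧ s < t + δ)} with hRdef
  refine ⟨S₀ ∪ R ∪ {t₀}, ?_, ?_, ⟨t₀, by simp⟩, ?_⟩
  · rintro s ((⟨⟨s', hs'⟩, -, rfl⟩ | hsR) | hs)
    · exact hs'
    · exact hsR.1
    · simp only [Set.mem_singleton_iff] at hs
      exact hs ▸ ht₀
  · exact ((hs₀c.image _).union (countable_right_isolated F)).union (Set.countable_singleton t₀)
  · intro t htF η hη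
    by_cases hR : t ∈ R
    · exact ⟨t, Or.inl (Or.inr hR), le_refl t, lt_add_of_pos_right t hη⟩
    · have hex : ∃ sf ∈ F, t < sf ∧ sf < t + η := by
        rw [hRdef, Set.mem_setOf_eq] at hR
        push_neg at hR
        obtain ⟨sf, hsfF, hsf⟩ := hR htF η hη
        exact ⟨sf, hsfF, hsf⟩
      obtain ⟨sf, hsfF, hsf1, hsf2⟩ := hex
      set ρ := min (sf - t) (t + η - sf) with hρ
      have hρpos : 0 < ρ := lt_min (by linarith) (by linarith)
      have hcl : (⟨sf, hsfF⟩ : ↥F) ∈ closure s₀ := hs₀d _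
      rw [Metric.mem_closure_iff] at hcl
      obtain ⟨b, hb, hdist⟩ := hcl ρ hρpos
      have hdd : |sf - (b : ℝ)| < ρ := by
        have := hdist
        rw [Subtype.dist_eq, Real.dist_eq] at this
        exact this
      rw [abs_lt] at hdd
      have h1 : ρ ≤ sf - t := min_le_left _ _
      have h2 : ρ ≤ t + η - sf := min_le_right _ _
      refine ⟨(b : ℝ), Or.inl (Or.inl ⟨b, hb, rfl⟩), by linarith [hdd.1, hdd.2], by
        linarith [hdd.1, hdd.2]⟩

end Dense
end KXAux
set_option maxHeartbeats 2000000 in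
/-- Hitting probability bound under `P_{λ_d} = P ⊗ λ_d` (process started at `x`): for every
bounded Borel `F ⊆ [0,∞)` and `ε > 0`,
`inf_{ν ∈ P(F)} ∫∫ κ_ε(|t-s|) ν(ds)ν(dt) · P_{λ_d}{inf_{t∈F} |X(t)| ≤ ε} ≤ 2^{d+1}(2ε)^d`. -/
theorem hitting_prob_bound {Ω : Type*} [MeasurableSpace Ω] {d : ℕ}
    (P : Measure Ω) (X : ℝ → Ω → (Fin d → ℝ)) (hX : IsLevyProcess P X)
    (F : Set ℝ) (hFmeas : MeasurableSet F) (hFbdd : Bornology.IsBounded F)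
    (hF : F ⊆ Set.Ici 0) (ε : ℝ) (hε : 0 < ε) :
    ENNReal.ofReal (⨅ ν : ProbOn F, ∫ t, ∫ s, kappa P X ε |t - s| ∂ν.1 ∂ν.1)
        * (P.prod volume) {p : Ω × (Fin d → ℝ) | sInf ((fun t => ‖p.2 + X t p.1‖) '' F) ≤ ε}
      ≤ ENNReal.ofReal (2 ^ (d + 1) * (2 * ε) ^ d) := by
  classical
  haveI := hX.isProb
  rcases F.eq_empty_or_nonempty with rfl | hFne
  · haveI : IsEmpty (ProbOn (∅ : Set ℝ)) := by
      constructor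
      rintro ⟨ν, hν1, hν2⟩
      rw [measure_empty] at hν2
      exact zero_ne_one hν2
    rw [Real.iInf_of_isEmpty, ENNReal.ofReal_zero, zero_mul]
    exact zero_le
  obtain ⟨S, hSF, hScnt, hSne, hSdense⟩ := KXAux.exists_countable_rdense F hFne
  obtain ⟨e, hrange⟩ := Set.Countable.exists_eq_range hScnt hSne
  obtain ⟨t₀, ht₀F⟩ := hFne
  have hnull := hX.cadlag
  rw [ae_iff] at hnull
  obtain ⟨N, hsubN, hNmeas, hNnull⟩ := exists_measurable_superset_of_null hnull
  set I := (⨅ ν : ProbOn F, ∫ t, ∫ s, kappa P X ε |t - s| ∂ν.1 ∂ν.1) with hI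
  have key : ∀ k : ℕ, ENNReal.ofReal I *
      (P.prod volume) {p : Ω × (Fin d → ℝ) | sInf ((fun t => ‖p.2 + X t p.1‖) '' F) ≤ ε}
      ≤ ENNReal.ofReal (2 ^ (d+1) * (2 * (ε + 1/((k:ℝ)+1)))^d) := by
    intro k
    set r : ℝ := ε + 1/((k:ℝ)+1) with hr
    have hrpos : ε < r := by
      rw [hr]
      have h0 : (0:ℝ) < 1/((k:ℝ)+1) := by positivity
      linarith
    set Bn : ℕ → Set (Ω × (Fin d → ℝ)) :=
      fun n => {p | ∃ i : ℕ, i < n ∧ ‖p.2 + X (e i) p.1‖ < r} with hBn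
    have hBmono : Monotone Bn := by
      rintro n n' hnn' p ⟨i, hi, hp⟩
      exact ⟨i, lt_of_lt_of_le hi hnn', hp⟩
    have hcover : {p : Ω × (Fin d → ℝ) | sInf ((fun t => ‖p.2 + X t p.1‖) '' F) ≤ ε}
        ⊆ (N ×ˢ (Set.univ : Set (Fin d → ℝ))) ∪ ⋃ n, Bn n := by
      intro p hp
      by_cases hN : p.1 ∈ N
      · exact Or.inl ⟨hN, trivial⟩
      · right
        have hgood : ∀ t : ℝ, 0 ≤ t → ContinuousWithinAt (fun s => X s p.1) (Ici t) t ∧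
            (0 < t → ∃ l, Tendsto (fun s => X s p.1) (nhdsWithin t (Iio t)) (nhds l)) := by
          by_contra hcon
          exact hN (hsubN hcon)
        have himgne : ((fun t => ‖p.2 + X t p.1‖) '' F).Nonempty := ⟨_, ⟨t₀, ht₀F, rfl⟩⟩
        have himgbdd : BddBelow ((fun t => ‖p.2 + X t p.1‖) '' F) := by
          refine ⟨0, ?_⟩
          rintro y ⟨t, -, rfl⟩
          exact norm_nonneg _
        have hlt : sInf ((fun t => ‖p.2 + X t p.1‖) '' F) < r := lt_of_le_of_lt hp hrpos
        rw [csInf_lt_iff himgbdd himgne] at hlt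
        obtain ⟨y, ⟨t, htF, rfl⟩, hy⟩ := hlt
        set δ' := r - ‖p.2 + X t p.1‖ with hδ'
        have hδ'pos : 0 < δ' := by rw [hδ']; simp only at hy; linarith
        have hcont := (hgood t (hF htF)).1
        rw [Metric.continuousWithinAt_iff] at hcont
        obtain ⟨η, hηpos, hcont⟩ := hcont δ' hδ'pos
        obtain ⟨s, hsS, hts, hst⟩ := hSdense t htF η hηpos
        have hdist_st : dist s t < η := by
          rw [Real.dist_eq, abs_lt]
          constructor <;> linarith
        have hXst := hcont (show s ∈ Ici t from hts) hdist_st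
        rw [dist_eq_norm] at hXst
        have hnorm : ‖p.2 + X s p.1‖ < r := by
          have h3 : p.2 + X s p.1 = (p.2 + X t p.1) + (X s p.1 - X t p.1) := by abel
          calc ‖p.2 + X s p.1‖ = ‖(p.2 + X t p.1) + (X s p.1 - X t p.1)‖ := by rw [← h3]
            _ ≤ ‖p.2 + X t p.1‖ + ‖X s p.1 - X t p.1‖ := norm_add_le _ _
            _ < ‖p.2 + X t p.1‖ + δ' := by linarith [hXst]
            _ = r := by rw [hδ']; ring
        have hsrange : s ∈ Set.range e := by rw [← hrange]; exact hsS
        obtain ⟨i, hie⟩ := hsrange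
        exact Set.mem_iUnion.mpr ⟨i+1, ⟨i, Nat.lt_succ_self i, by rw [hie]; exact hnorm⟩⟩
    have hmeasBn : ∀ n, MeasurableSet (Bn n) := by
      intro n
      have heq : Bn n = ⋃ (i : ℕ) (_ : i < n),
          {p : Ω × (Fin d → ℝ) | ‖p.2 + X (e i) p.1‖ < r} := by
        ext p
        simp only [hBn, Set.mem_setOf_eq, Set.mem_iUnion]
        constructor
        · rintro ⟨i, hi, hp⟩; exact ⟨i, hi, hp⟩
        · rintro ⟨i, hi, hp⟩; exact ⟨i, hi, hp⟩
      rw [heq]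
      exact MeasurableSet.iUnion fun i => MeasurableSet.iUnion fun _ =>
        KXAux.slab_meas (hX.meas _) r
    have hμcover : (P.prod volume) {p : Ω × (Fin d → ℝ) |
          sInf ((fun t => ‖p.2 + X t p.1‖) '' F) ≤ ε}
        ≤ ⨆ n, (P.prod volume) (Bn n) := by
      calc (P.prod volume) {p : Ω × (Fin d → ℝ) | sInf ((fun t => ‖p.2 + X t p.1‖) '' F) ≤ ε}
          ≤ (P.prod volume) ((N ×ˢ (Set.univ : Set (Fin d → ℝ))) ∪ ⋃ n, Bn n) :=
            measure_mono hcover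
        _ ≤ (P.prod volume) (N ×ˢ (Set.univ : Set (Fin d → ℝ)))
            + (P.prod volume) (⋃ n, Bn n) := measure_union_le _ _
        _ = (P.prod volume) (⋃ n, Bn n) := by
            rw [Measure.prod_prod, hNnull, zero_mul, zero_add]
        _ = ⨆ n, (P.prod volume) (Bn n) := Directed.measure_iUnion (hBmono.directed_le)
    have hgrid : ∀ n, ENNReal.ofReal I * (P.prod volume) (Bn n)
        ≤ ENNReal.ofReal (2^(d+1) * (2*r)^d) := by
      intro n
      set T : Finset ℝ := (Finset.range n).image e with hT
      set τ : Fin T.card → ℝ := fun l => ((T.orderIsoOfFin rfl) l : ℝ) with hτ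
      have hτmono : Monotone τ := by
        intro a b hab
        exact Subtype.coe_le_coe.mpr ((T.orderIsoOfFin rfl).monotone hab)
      have hτF : ∀ l, τ l ∈ F := by
        intro l
        have hmem : ((T.orderIsoOfFin rfl) l : ℝ) ∈ (Finset.range n).image e :=
          ((T.orderIsoOfFin rfl) l).2
        obtain ⟨i, _, hei⟩ := Finset.mem_image.mp hmem
        simp only [hτ]
        rw [← hei]
        exact hSF (by rw [hrange]; exact ⟨i, rfl⟩)
      have hBeq : Bn n = {p : Ω × (Fin d → ℝ) | ∃ l, ‖p.2 + X (τ l) p.1‖ < r} := by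
        ext p
        simp only [hBn, Set.mem_setOf_eq]
        constructor
        · rintro ⟨i, hi, hp⟩
          have hmem : e i ∈ T := by
            rw [hT]
            exact Finset.mem_image.mpr ⟨i, Finset.mem_range.mpr hi, rfl⟩
          obtain ⟨l, hl⟩ := (T.orderIsoOfFin rfl).surjective ⟨e i, hmem⟩
          refine ⟨l, ?_⟩
          have hτl : τ l = e i := by simp only [hτ]; rw [hl]
          rw [hτl]
          exact hp
        · rintro ⟨l, hp⟩
          have hmem : τ l ∈ (Finset.range n).image e := ((T.orderIsoOfFin rfl) l).2
          obtain ⟨i, hi, hei⟩ := Finset.mem_image.mp hmem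
          exact ⟨i, Finset.mem_range.mp hi, by rw [hei]; exact hp⟩
      rw [hBeq, hI]
      exact KXAux.finite_grid P X hX F hFmeas hF τ hτmono hτF hε (le_of_lt hrpos) ⟨t₀, ht₀F⟩
    calc ENNReal.ofReal I * (P.prod volume) {p : Ω × (Fin d → ℝ) |
          sInf ((fun t => ‖p.2 + X t p.1‖) '' F) ≤ ε}
        ≤ ENNReal.ofReal I * ⨆ n, (P.prod volume) (Bn n) := mul_le_mul_right hμcover _
      _ = ⨆ n, ENNReal.ofReal I * (P.prod volume) (Bn n) := ENNReal.mul_iSup _ _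
      _ ≤ ENNReal.ofReal (2^(d+1) * (2*r)^d) := iSup_le hgrid
  have hlim : Tendsto (fun k : ℕ => ENNReal.ofReal (2^(d+1) * (2*(ε + 1/((k:ℝ)+1)))^d)) atTop
      (nhds (ENNReal.ofReal (2^(d+1) * (2*ε)^d))) := by
    have h1 : Tendsto (fun k : ℕ => ε + 1/((k:ℝ)+1)) atTop (nhds ε) := by
      have h0 := tendsto_one_div_add_atTop_nhds_zero_nat (𝕜 := ℝ)
      have h2 := h0.const_add ε
      simpa using h2
    have h3 := h1.const_mul (2:ℝ)
    have h4 := h3.pow d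
    have h5 := h4.const_mul ((2:ℝ)^(d+1))
    exact (ENNReal.continuous_ofReal.tendsto _).comp h5
  exact ge_of_tendsto' hlim key
end
end
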